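/- For any configuration on ℤ^{d+1}: if l_u^+(M_u) = ∞ for some u ∈ 𝕃, then l_{u'}^+(M_{u'}) = ∞ for every u' ∈ 𝕃; and if l_u^−(M_u) = ∞ for some u ∈ 𝕃, then l_{u'}^−(M_{u'}) = ∞ for every u' ∈ 𝕃. -/

import Mathlib

open MeasureTheory
open scoped ENNReal

noncomputable section

/-- A site of `ℤ^{d+1}`: a base in `ℤ^d` and a height in `ℤ`. -/
abbrev Site (d : ℕ) := (Fin d → ℤ) × ℤ

/-- `Sign(x)`: `{1}` if `x > 0`, `{-1}` if `x < 0`, `{-1, 1}` if `x = 0`. -/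
def signSet (x : ℤ) : Set ℤ := if 0 < x then {1} else if x < 0 then {-1} else {-1, 1}

/-- `ℓ¹`-distance between two bases. -/
def l1 {d : ℕ} (b b' : Fin d → ℤ) : ℤ := ∑ j, |b j - b' j|

/-- `ℓ¹`-distance between two sites. -/
def dist1 {d : ℕ} (u v : Site d) : ℤ := l1 u.1 v.1 + |u.2 - v.2|

/-- A single move of a d-path: either a vertical move into a closed site,
or a diagonal move towards the zero-height hyperplane. -/
def DStep {d : ℕ} (ω : Site d → Bool) (p q : Site d) : Prop :=
  (q.1 = p.1 ∧ (q.2 - p.2) ∈ signSet p.2 ∧ ω q = true) ∨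
  (l1 q.1 p.1 = 1 ∧ (p.2 - q.2) ∈ signSet p.2 ∧ p.2 ≠ 0)

/-- There is a d-path from `u` (a closed site of the zero-height hyperplane) to `v`. -/
def IsDPath {d : ℕ} (ω : Site d → Bool) (u v : Site d) : Prop :=
  u.2 = 0 ∧ ω u = true ∧
  ∃ (k : ℕ) (p : Fin (k + 1) → Site d), Function.Injective p ∧
    p 0 = u ∧ p (Fin.last k) = v ∧
    ∀ i : Fin k, DStep ω (p i.castSucc) (p i.succ)

/-- `hat v`: sites with the same base as `v` but further from the zero-height hyperplane. -/
def hatSet {d : ℕ} (v : Site d) : Set (Site d) :=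
  {w | w.1 = v.1 ∧ 0 ≤ v.2 * w.2 ∧ |v.2| ≤ |w.2|}

/-- `u ↣ v`: there is a d-path from `u` to some site of `hat v`. -/
def reaches {d : ℕ} (ω : Site d → Bool) (u v : Site d) : Prop :=
  ∃ w ∈ hatSet v, IsDPath ω u w

/-- The hill around `u`. -/
def hill {d : ℕ} (ω : Site d → Bool) (u : Site d) : Set (Site d) := {v | reaches ω u v}

/-- The mountain around `v`: the union of all hills (around sites of the zero-height
hyperplane) containing `v`. -/
def mountain {d : ℕ} (ω : Site d → Bool) (v : Site d) : Set (Site d) :=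
  {w | ∃ u : Site d, u.2 = 0 ∧ v ∈ hill ω u ∧ w ∈ hill ω u}

/-- Positive depth `l_u^+(S)`. -/
def depthPlus {d : ℕ} (u : Site d) (S : Set (Site d)) : ℕ∞ :=
  ⨆ k ∈ {k : ℕ | ((u.1, u.2 + (k : ℤ)) : Site d) ∈ S}, (k : ℕ∞)

/-- Negative depth `l_u^-(S)`. -/
def depthMinus {d : ℕ} (u : Site d) (S : Set (Site d)) : ℕ∞ :=
  ⨆ k ∈ {k : ℕ | ((u.1, u.2 - (k : ℤ)) : Site d) ∈ S}, (k : ℕ∞)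

/-- Radius `rad_u(S) = sup {‖v - u‖₁ : v ∈ S}`, valued in `ℝ≥0∞`. -/
def radius {d : ℕ} (u : Site d) (S : Set (Site d)) : ℝ≥0∞ :=
  ⨆ v ∈ S, ((dist1 u v).toNat : ℝ≥0∞)

open Classical in
/-- `F₊(b) = 1 + l_{(b,0)}^+(M_{(b,0)})` if the mountain is nonempty, `0` otherwise. -/
def Fplus {d : ℕ} (ω : Site d → Bool) (b : Fin d → ℤ) : ℤ :=
  if (mountain ω (b, 0)).Nonempty then
    1 + ((depthPlus ((b, 0) : Site d) (mountain ω (b, 0))).toNat : ℤ)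
  else 0

open Classical in
/-- `F₋(b) = -1 - l_{(b,0)}^-(M_{(b,0)})` if the mountain is nonempty, `0` otherwise. -/
def Fminus {d : ℕ} (ω : Site d → Bool) (b : Fin d → ℤ) : ℤ :=
  if (mountain ω (b, 0)).Nonempty then
    -1 - ((depthMinus ((b, 0) : Site d) (mountain ω (b, 0))).toNat : ℤ)
  else 0

/-- Shift of a configuration by a site `s`. -/
def shift {d : ℕ} (s : Site d) (ω : Site d → Bool) : Site d → Bool := fun v => ω (v + s)

/-- The origin of the zero-height hyperplane. -/
def origin (d : ℕ) : Site d := (0, 0)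



-- ===================== auxiliary lemmas =====================

open Relation in
lemma exists_nodup_chain_aux {α : Type*} [DecidableEq α] (r : α → α → Prop) {u v : α}
    (h : Relation.ReflTransGen r u v) :
    ∃ l : List α, l.Nodup ∧ l.Chain' r ∧ l.head? = some u ∧ l.getLast? = some v := by
  induction h with
  | refl => exact ⟨[u], by simp, List.isChain_singleton _, rfl, rfl⟩
  | @tail b c hab hbc ih =>
    obtain ⟨l, hnd, hch, hhd, hlast⟩ := ih
    by_cases hc : c ∈ l
    · have hilt : l.idxOf c < l.length := List.idxOf_lt_length_iff.mpr hc
      have hlen : (l.take (l.idxOf c + 1)).length = l.idxOf c + 1 := by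
        simp [List.length_take]; omega
      refine ⟨l.take (l.idxOf c + 1), hnd.sublist (l.take_sublist _), hch.take _, ?_, ?_⟩
      · rw [List.head?_eq_getElem?] at hhd ⊢
        rw [List.getElem?_take]
        rw [if_pos (by omega)]
        exact hhd
      · rw [List.getLast?_eq_getElem?, hlen]
        simp only [Nat.add_sub_cancel]
        rw [List.getElem?_take]
        rw [if_pos (by omega)]
        rw [List.getElem?_eq_getElem hilt, List.getElem_idxOf hilt]
    · have hne : l ≠ [] := by rintro rfl; simp at hhd
      refine ⟨l ++ [c], by simp [List.nodup_append, hnd, hc]; exact fun a ha hac => hc (hac ▸ ha), ?_, ?_, by simp⟩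
      · apply List.IsChain.append hch (List.isChain_singleton _)
        intro x hx y hy
        simp at hx hy
        rw [hx, Option.some_inj] at hlast
        rw [hlast, ← hy]; exact hbc
      · rw [List.head?_append_of_ne_nil _ hne]
        exact hhd

lemma isDPath_iff {d : ℕ} (ω : Site d → Bool) (u v : Site d) :
    IsDPath ω u v ↔ u.2 = 0 ∧ ω u = true ∧ Relation.ReflTransGen (DStep ω) u v := by
  constructor
  · rintro ⟨h0, hω, k, p, hinj, hp0, hpl, hstep⟩
    refine ⟨h0, hω, ?_⟩
    have key : ∀ i : ℕ, ∀ hi : i < k + 1, Relation.ReflTransGen (DStep ω) u (p ⟨i, hi⟩) := by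
      intro i
      induction i with
      | zero => intro hi; rw [show (⟨0, hi⟩ : Fin (k+1)) = 0 from rfl, hp0]
      | succ m ihm =>
        intro hi
        have hm : m < k := by omega
        refine (ihm (by omega)).tail ?_
        have := hstep ⟨m, hm⟩
        simpa [Fin.castSucc, Fin.succ] using this
    have := key k (by omega)
    rwa [show (⟨k, by omega⟩ : Fin (k+1)) = Fin.last k from rfl, hpl] at this
  · rintro ⟨h0, hω, hrt⟩
    obtain ⟨l, hnd, hch, hhd, hlast⟩ := exists_nodup_chain_aux _ hrt
    have hne : l ≠ [] := by rintro rfl; simp at hhd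
    have hlen : l.length = (l.length - 1) + 1 := by
      cases l with | nil => simp at hne | cons a t => simp
    refine ⟨h0, hω, l.length - 1, fun i => l.get (Fin.cast hlen.symm i), ?_, ?_, ?_, ?_⟩
    · intro i j hij
      have := List.nodup_iff_injective_get.mp hnd hij
      simpa [Fin.ext_iff] using this
    · have : l.head? = some (l.get ⟨0, by omega⟩) := by
        rw [List.head?_eq_getElem?, List.getElem?_eq_getElem (by omega)]
        rfl
      rw [this] at hhd
      simpa using hhd
    · have : l.getLast? = some (l.get ⟨l.length - 1, by omega⟩) := by
        rw [List.getLast?_eq_getElem?, List.getElem?_eq_getElem (by omega)]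
        rfl
      rw [this] at hlast
      simpa [Fin.last] using hlast
    · intro i
      have := List.isChain_iff_getElem.mp hch i (by omega)
      simpa [Fin.castSucc, Fin.succ] using this

lemma l1_nonneg' {d : ℕ} (b b' : Fin d → ℤ) : 0 ≤ l1 b b' :=
  Finset.sum_nonneg fun _ _ => abs_nonneg _

lemma l1_eq_zero' {d : ℕ} {b b' : Fin d → ℤ} (h : l1 b b' = 0) : b = b' := by
  have := (Finset.sum_eq_zero_iff_of_nonneg (fun i _ => abs_nonneg (b i - b' i))).mp h
  funext i
  have := abs_eq_zero.mp (this i (Finset.mem_univ i))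
  omega

lemma step_toward {d : ℕ} {b b' : Fin d → ℤ} (hne : b ≠ b') :
    ∃ b₁ : Fin d → ℤ, l1 b₁ b = 1 ∧ l1 b₁ b' + 1 = l1 b b' := by
  obtain ⟨j, hj⟩ : ∃ j, b j ≠ b' j := by
    by_contra hcon; push_neg at hcon; exact hne (funext hcon)
  set s : ℤ := if b j < b' j then 1 else -1 with hs
  refine ⟨Function.update b j (b j + s), ?_, ?_⟩
  · rw [l1]
    rw [Finset.sum_eq_single_of_mem j (Finset.mem_univ j)]
    · simp only [Function.update_self]
      have harith : b j + s - b j = s := by ring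
      rw [harith]
      by_cases hlt : b j < b' j <;> simp [hs, hlt]
    · intro i _ hij
      simp [Function.update_of_ne hij]
  · have key : l1 b b' - l1 (Function.update b j (b j + s)) b' = 1 := by
      rw [l1, l1, ← Finset.sum_sub_distrib]
      rw [Finset.sum_eq_single_of_mem j (Finset.mem_univ j)]
      · simp only [Function.update_self]
        rcases lt_or_ge (b j) (b' j) with h | h
        · rw [if_pos h] at hs
          rw [hs, abs_of_neg (by omega), abs_of_nonpos (by omega)]; ring
        · have h' : b' j < b j := lt_of_le_of_ne h (Ne.symm hj)
          rw [if_neg (not_lt.mpr h)] at hs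
          rw [hs, abs_of_pos (by omega), abs_of_nonneg (by omega)]; ring
      · intro i _ hij
        simp [Function.update_of_ne hij]
    omega

lemma walk_down {d : ℕ} (ω : Site d → Bool) :
    ∀ (n : ℕ) (b b' : Fin d → ℤ) (h : ℤ), l1 b b' = n → (n : ℤ) < h →
      Relation.ReflTransGen (DStep ω) (b, h) (b', h - n) := by
  intro n
  induction n with
  | zero =>
    intro b b' h hl _
    have := l1_eq_zero' hl
    subst this
    simpa using Relation.ReflTransGen.refl
  | succ m ih =>
    intro b b' h hl hh
    have hne : b ≠ b' := by
      rintro rfl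
      have h0 : l1 b b = 0 := by simp [l1]
      rw [h0] at hl
      push_cast at hl
      omega
    obtain ⟨b₁, hb1, hb2⟩ := step_toward hne
    have hstep : DStep ω (b, h) (b₁, h - 1) := by
      right
      refine ⟨hb1, ?_, by intro hc; omega⟩
      have hpos : 0 < h := by push_cast at hh; omega
      simp [signSet, hpos]
    have := ih b₁ b' (h - 1) (by push_cast at hl ⊢; omega) (by push_cast at hh ⊢; omega)
    have heq : h - 1 - (m : ℤ) = h - ((m : ℕ) + 1 : ℕ) := by push_cast; ring
    exact Relation.ReflTransGen.head hstep (heq ▸ this)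

lemma walk_up {d : ℕ} (ω : Site d → Bool) :
    ∀ (n : ℕ) (b b' : Fin d → ℤ) (h : ℤ), l1 b b' = n → h < -(n : ℤ) →
      Relation.ReflTransGen (DStep ω) (b, h) (b', h + n) := by
  intro n
  induction n with
  | zero =>
    intro b b' h hl _
    have := l1_eq_zero' hl
    subst this
    simpa using Relation.ReflTransGen.refl
  | succ m ih =>
    intro b b' h hl hh
    have hne : b ≠ b' := by
      rintro rfl
      have h0 : l1 b b = 0 := by simp [l1]
      rw [h0] at hl
      push_cast at hl
      omega
    obtain ⟨b₁, hb1, hb2⟩ := step_toward hne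
    have hstep : DStep ω (b, h) (b₁, h + 1) := by
      right
      refine ⟨hb1, ?_, by intro hc; push_cast at hh; omega⟩
      have hneg : h < 0 := by push_cast at hh; omega
      simp [signSet, hneg, not_lt.mpr hneg.le]
    have := ih b₁ b' (h + 1) (by push_cast at hl ⊢; omega) (by push_cast at hh ⊢; omega)
    have heq : h + 1 + (m : ℤ) = h + ((m : ℕ) + 1 : ℕ) := by push_cast; ring
    exact Relation.ReflTransGen.head hstep (heq ▸ this)

lemma biSup_eq_top_of_all {S : Set ℕ} (h : ∀ k : ℕ, k ∈ S) :
    (⨆ k ∈ S, (k : ℕ∞)) = ⊤ := by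
  by_contra hne
  set X := (⨆ k ∈ S, (k : ℕ∞)) with hX
  have hle : ∀ n : ℕ, (n : ℕ∞) ≤ X := fun n =>
    le_iSup₂ (f := fun (k : ℕ) (_ : k ∈ S) => (k : ℕ∞)) n (h n)
  lift X to ℕ using hne with m hm
  have := hle (m + 1)
  exact_mod_cast absurd this (by exact_mod_cast by omega)

lemma exists_large_of_biSup_top {S : Set ℕ} (h : (⨆ k ∈ S, (k : ℕ∞)) = ⊤) (n : ℕ) :
    ∃ k ∈ S, n ≤ k := by
  by_contra hcon
  push_neg at hcon
  have hb : (⨆ k ∈ S, (k : ℕ∞)) ≤ (n : ℕ∞) :=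
    iSup₂_le fun k hk => by exact_mod_cast (hcon k hk).le
  rw [h] at hb
  exact absurd hb (by simp)


lemma plus_transfer {d : ℕ} (ω : Site d → Bool) (b b' : Fin d → ℤ)
    (hb : depthPlus ((b, 0) : Site d) (mountain ω (b, 0)) = ⊤) (k' : ℕ) :
    ((b', (0:ℤ) + (k' : ℤ)) : Site d) ∈ mountain ω (b', 0) := by
  set D : ℕ := (l1 b b').toNat with hDdef
  have hD : (D : ℤ) = l1 b b' := Int.toNat_of_nonneg (l1_nonneg' _ _)
  unfold depthPlus at hb
  obtain ⟨k, hkmem, hkge⟩ := exists_large_of_biSup_top hb (k' + D + 1)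
  simp only [Set.mem_setOf_eq] at hkmem
  obtain ⟨u, hu0, _, hhill⟩ := hkmem
  obtain ⟨w, hw, hpath⟩ := hhill
  obtain ⟨hw1, hw2, hw3⟩ := hw
  simp only at hw1 hw2 hw3
  have hk1 : (1 : ℤ) ≤ (k : ℤ) := by exact_mod_cast Nat.one_le_iff_ne_zero.mpr (by omega)
  have hw2' : (0:ℤ) ≤ w.2 := by
    by_contra hneg
    push_neg at hneg
    have : ((0:ℤ) + (k:ℤ)) * w.2 < 0 := mul_neg_of_pos_of_neg (by omega) hneg
    omega
  have hwge : (k : ℤ) ≤ w.2 := by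
    rw [abs_of_nonneg (by omega), abs_of_nonneg hw2'] at hw3
    omega
  have hrt : Relation.ReflTransGen (DStep ω) u w := ((isDPath_iff ω u w).mp hpath).2.2
  have hωu : ω u = true := ((isDPath_iff ω u w).mp hpath).2.1
  have hrt2 := walk_down ω D b b' w.2 hD.symm (by push_cast; omega)
  have hw' : w = (b, w.2) := Prod.ext hw1 rfl
  rw [← hw'] at hrt2
  have hpath' : IsDPath ω u (b', w.2 - D) :=
    (isDPath_iff ω u _).mpr ⟨hu0, hωu, hrt.trans hrt2⟩
  have hbig : (k':ℤ) + D + 1 ≤ w.2 := by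
    have : ((k' + D + 1 : ℕ) : ℤ) ≤ (k : ℤ) := by exact_mod_cast hkge
    push_cast at this
    omega
  refine ⟨u, hu0, ⟨(b', w.2 - D), ⟨rfl, by simp, by simp [abs_nonneg]⟩, hpath'⟩, ?_⟩
  refine ⟨(b', w.2 - D), ⟨rfl, ?_, ?_⟩, hpath'⟩
  · exact mul_nonneg (by positivity) (by omega)
  · rw [abs_of_nonneg (by positivity), abs_of_nonneg (by omega)]
    simp only
    omega

lemma minus_transfer {d : ℕ} (ω : Site d → Bool) (b b' : Fin d → ℤ)
    (hb : depthMinus ((b, 0) : Site d) (mountain ω (b, 0)) = ⊤) (k' : ℕ) :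
    ((b', (0:ℤ) - (k' : ℤ)) : Site d) ∈ mountain ω (b', 0) := by
  set D : ℕ := (l1 b b').toNat with hDdef
  have hD : (D : ℤ) = l1 b b' := Int.toNat_of_nonneg (l1_nonneg' _ _)
  unfold depthMinus at hb
  obtain ⟨k, hkmem, hkge⟩ := exists_large_of_biSup_top hb (k' + D + 1)
  simp only [Set.mem_setOf_eq] at hkmem
  obtain ⟨u, hu0, _, hhill⟩ := hkmem
  obtain ⟨w, hw, hpath⟩ := hhill
  obtain ⟨hw1, hw2, hw3⟩ := hw
  simp only at hw1 hw2 hw3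
  have hk1 : (1 : ℤ) ≤ (k : ℤ) := by exact_mod_cast Nat.one_le_iff_ne_zero.mpr (by omega)
  have hw2' : w.2 ≤ 0 := by
    by_contra hneg
    push_neg at hneg
    have : ((0:ℤ) - (k:ℤ)) * w.2 < 0 := mul_neg_of_neg_of_pos (by omega) hneg
    omega
  have hwge : w.2 ≤ -(k : ℤ) := by
    rw [abs_of_nonpos (by omega), abs_of_nonpos hw2'] at hw3
    omega
  have hrt : Relation.ReflTransGen (DStep ω) u w := ((isDPath_iff ω u w).mp hpath).2.2
  have hωu : ω u = true := ((isDPath_iff ω u w).mp hpath).2.1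
  have hrt2 := walk_up ω D b b' w.2 hD.symm (by push_cast; omega)
  have hw' : w = (b, w.2) := Prod.ext hw1 rfl
  rw [← hw'] at hrt2
  have hpath' : IsDPath ω u (b', w.2 + D) :=
    (isDPath_iff ω u _).mpr ⟨hu0, hωu, hrt.trans hrt2⟩
  have hbig : w.2 + D ≤ -((k':ℤ)) - 1 := by
    have : ((k' + D + 1 : ℕ) : ℤ) ≤ (k : ℤ) := by exact_mod_cast hkge
    push_cast at this
    omega
  refine ⟨u, hu0, ⟨(b', w.2 + D), ⟨rfl, by simp, by simp [abs_nonneg]⟩, hpath'⟩, ?_⟩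
  refine ⟨(b', w.2 + D), ⟨rfl, ?_, ?_⟩, hpath'⟩
  · have h1 : ((0:ℤ) - (k':ℤ)) ≤ 0 := by omega
    have h2 : w.2 + (D:ℤ) ≤ 0 := by omega
    have := mul_nonneg (neg_nonneg.mpr h1) (neg_nonneg.mpr h2)
    rwa [neg_mul_neg] at this
  · rw [abs_of_nonpos (by omega), abs_of_nonpos (by omega)]
    simp only
    omega


/-- If some depth `l_u^±(M_u)` is infinite, then it is infinite for
every `u` in the zero-height hyperplane. -/
theorem infinite_depth_everywhere
    (d : ℕ) (hd : 1 ≤ d) (ω : Site d → Bool) :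
    ((∃ b : Fin d → ℤ, depthPlus ((b, 0) : Site d) (mountain ω (b, 0)) = ⊤) →
      ∀ b' : Fin d → ℤ, depthPlus ((b', 0) : Site d) (mountain ω (b', 0)) = ⊤) ∧
    ((∃ b : Fin d → ℤ, depthMinus ((b, 0) : Site d) (mountain ω (b, 0)) = ⊤) →
      ∀ b' : Fin d → ℤ, depthMinus ((b', 0) : Site d) (mountain ω (b', 0)) = ⊤) := by
  constructor
  · rintro ⟨b, hb⟩ b'
    unfold depthPlus
    apply biSup_eq_top_of_all
    intro k'
    exact plus_transfer ω b b' hb k'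
  · rintro ⟨b, hb⟩ b'
    unfold depthMinus
    apply biSup_eq_top_of_all
    intro k'
    exact minus_transfer ω b b' hb k'


end
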